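/- Consider problem (P₂) and suppose there exists (x,z) ∈ ℝ^l × ℝ^k with Σᵢ(½αᵢxᵢ² + bᵢxᵢ) + Σⱼ zⱼ + c < 0. Then the infimum of (P₂) equals sup over ν ≥ 0 of ρ(ν) = cν + c₀ + Σᵢ hᵢ(ν) + g(ν) (as extended real numbers), where hᵢ(ν) = −(νbᵢ + eᵢ)²/(2(ναᵢ + δᵢ)) if ναᵢ + δᵢ > 0, hᵢ(ν) = 0 if ναᵢ + δᵢ = 0 and eᵢ + νbᵢ = 0, and hᵢ(ν) = −∞ otherwise; and g(ν) = 0 if ζⱼ + ν = 0 for all j = 1,…,k, and g(ν) = −∞ otherwise. -/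

import Mathlib

open scoped Classical

/-- The objective `f(x,u,w) = Σᵢ(½δᵢxᵢ² + eᵢxᵢ) + Σⱼ(ζⱼuⱼwⱼ + ½wⱼ² + ηⱼwⱼ)` of problem (P₁). -/
noncomputable def quadObj {l k : ℕ} (δ e : Fin l → ℝ) (ζ η : Fin k → ℝ)
    (x : Fin l → ℝ) (u w : Fin k → ℝ) : ℝ :=
  (∑ i, ((1/2) * δ i * x i ^ 2 + e i * x i)) +
    ∑ j, (ζ j * u j * w j + (1/2) * w j ^ 2 + η j * w j)

/-- The constraint function `h(x,u,w) = Σᵢ(½αᵢxᵢ² + bᵢxᵢ) + Σⱼ uⱼwⱼ + c` of problem (P₁). -/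
noncomputable def quadCon {l k : ℕ} (α b : Fin l → ℝ) (c : ℝ)
    (x : Fin l → ℝ) (u w : Fin k → ℝ) : ℝ :=
  (∑ i, ((1/2) * α i * x i ^ 2 + b i * x i)) + (∑ j, u j * w j) + c

/-- The SOCP objective `Σᵢ(δᵢyᵢ + eᵢxᵢ) + Σⱼ ζⱼzⱼ + c₀` of problem (P₂). -/
noncomputable def socpObj {l k : ℕ} (δ e : Fin l → ℝ) (ζ : Fin k → ℝ) (c₀ : ℝ)
    (x y : Fin l → ℝ) (z : Fin k → ℝ) : ℝ :=
  (∑ i, (δ i * y i + e i * x i)) + (∑ j, ζ j * z j) + c₀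

/-- The linear part `Σᵢ(αᵢyᵢ + bᵢxᵢ) + Σⱼ zⱼ` of the SOCP constraint in (P₂). -/
noncomputable def socpConLhs {l k : ℕ} (α b : Fin l → ℝ)
    (x y : Fin l → ℝ) (z : Fin k → ℝ) : ℝ :=
  (∑ i, (α i * y i + b i * x i)) + ∑ j, z j

/-- The optimal value (in the extended reals) of the SOCP problem (P₂). -/
noncomputable def socpVal {l k : ℕ} (δ e α b : Fin l → ℝ) (ζ : Fin k → ℝ) (c c₀ : ℝ) : EReal :=
  sInf {v : EReal | ∃ (x y : Fin l → ℝ) (z : Fin k → ℝ),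
    socpConLhs α b x y z + c ≤ 0 ∧ (∀ i, (1/2) * x i ^ 2 ≤ y i) ∧
    v = (socpObj δ e ζ c₀ x y z : EReal)}

/-- The dual term `hᵢ(ν)` of Theorem 2.7 of Jiang–Li–Wu, with values in `ℝ ∪ {−∞}`. -/
noncomputable def hDual (αi δi bi ei ν : ℝ) : EReal :=
  if 0 < ν * αi + δi then ((-(ν * bi + ei) ^ 2 / (2 * (ν * αi + δi)) : ℝ) : EReal)
  else if ν * αi + δi = 0 ∧ ei + ν * bi = 0 then (0 : EReal)
  else ⊥

/-- The dual term `g(ν)` of Theorem 2.7 of Jiang–Li–Wu, with values in `ℝ ∪ {−∞}`. -/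
noncomputable def gDual {k : ℕ} (ζ : Fin k → ℝ) (ν : ℝ) : EReal :=
  if ∀ j, ζ j + ν = 0 then (0 : EReal) else ⊥

/-! Weak duality: `ρ(ν)` is the infimum of the Lagrangian over the cone `½ xᵢ² ≤ yᵢ`, where the
infimum separates into one-dimensional problems, and for `ν ≥ 0` the Lagrangian lies below the
objective at feasible points. Strong duality: (P₂) is convex, so Slater's condition yields a
multiplier `ν ≥ 0` such that the optimal value bounds the Lagrangian from below on the whole cone;
this forces every one-dimensional problem to be bounded, hence attained, so the value is at most
`ρ(ν)`. -/

@[norm_cast]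
lemma EReal.coe_finset_sum {ι : Type*} (s : Finset ι) (f : ι → ℝ) :
    ((∑ i ∈ s, f i : ℝ) : EReal) = ∑ i ∈ s, (f i : EReal) :=
  map_sum (⟨⟨Real.toEReal, EReal.coe_zero⟩, EReal.coe_add⟩ : ℝ →+ EReal) f s

lemma eq_zero_of_forall_le_mul {a m : ℝ} (h : ∀ t, m ≤ a * t) : a = 0 := by
  by_contra ha
  have := h ((m - 1) / a)
  rw [mul_div_cancel₀ _ ha] at this
  linarith

lemma nonneg_of_forall_le_mul {a m : ℝ} (h : ∀ t, 0 ≤ t → m ≤ a * t) : 0 ≤ a := by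
  by_contra! ha
  have hm : m ≤ 0 := by simpa using h 0 le_rfl
  have := h ((m - 1) / a) (div_nonneg_of_nonpos (by linarith) ha.le)
  rw [mul_div_cancel₀ _ ha.ne] at this
  linarith

section DualTerms

variable {k : ℕ} (ζ : Fin k → ℝ) (αi δi bi ei ν : ℝ)

lemma hDual_le {x y : ℝ} (hxy : (1/2) * x ^ 2 ≤ y) :
    hDual αi δi bi ei ν ≤ (((ν * αi + δi) * y + (ν * bi + ei) * x : ℝ) : EReal) := by
  unfold hDual
  split_ifs with hA hAB
  · rw [EReal.coe_le_coe_iff, div_le_iff₀ (by linarith)]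
    nlinarith [sq_nonneg ((ν * αi + δi) * x + (ν * bi + ei)), mul_le_mul_of_nonneg_left hxy hA.le]
  · rw [hAB.1, add_comm (ν * bi), hAB.2]
    simp
  · exact bot_le

lemma exists_hDual_eq_of_forall_le {m : ℝ}
    (h : ∀ x y : ℝ, (1/2) * x ^ 2 ≤ y → m ≤ (ν * αi + δi) * y + (ν * bi + ei) * x) :
    ∃ x y : ℝ, (1/2) * x ^ 2 ≤ y ∧
      hDual αi δi bi ei ν = (((ν * αi + δi) * y + (ν * bi + ei) * x : ℝ) : EReal) := by
  have hA : 0 ≤ ν * αi + δi :=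
    nonneg_of_forall_le_mul fun t ht => by simpa using h 0 t (by simpa using ht)
  rcases hA.lt_or_eq with hA | hA
  · refine ⟨-(ν * bi + ei) / (ν * αi + δi), _, le_rfl, ?_⟩
    rw [hDual, if_pos hA, EReal.coe_eq_coe_iff]
    field_simp
    ring
  · have hB : ν * bi + ei = 0 :=
      eq_zero_of_forall_le_mul fun t => by simpa [← hA] using h t _ le_rfl
    refine ⟨0, 0, by norm_num, ?_⟩
    simp [hDual, ← hA, add_comm ei, hB]

lemma gDual_le (z : Fin k → ℝ) : gDual ζ ν ≤ ((∑ j, (ζ j + ν) * z j : ℝ) : EReal) := by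
  unfold gDual
  split_ifs with h
  · simp [h]
  · exact bot_le

lemma gDual_eq_zero_of_forall_le {m : ℝ} (h : ∀ z : Fin k → ℝ, m ≤ ∑ j, (ζ j + ν) * z j) :
    gDual ζ ν = 0 :=
  if_pos fun j => eq_zero_of_forall_le_mul fun t => by
    simpa [Pi.single_apply] using h (Pi.single j t)

end DualTerms

section LagrangeMultiplier

variable {E : Type*} [AddCommGroup E] [Module ℝ E] {C : Set E} {f g : E → ℝ} {V : ℝ}

/-- The point of the segment `[x₁, x]` at which the convex interpolation of `g` vanishes is
feasible, so `V` is at most the corresponding interpolation of `f`. -/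
lemma div_le_div_of_convexOn (hf : ConvexOn ℝ C f) (hg : ConvexOn ℝ C g)
    (hV : ∀ x ∈ C, g x ≤ 0 → V ≤ f x) {x x₁ : E} (hx : x ∈ C) (hx₁ : x₁ ∈ C)
    (hgx : 0 < g x) (hgx₁ : g x₁ < 0) :
    (V - f x) / g x ≤ (f x₁ - V) / -g x₁ := by
  have hd : 0 < g x - g x₁ := by linarith
  set θ := g x / (g x - g x₁) with hθ_def
  set μ := -g x₁ / (g x - g x₁) with hμ_def
  have hθ : 0 ≤ θ := div_nonneg hgx.le hd.le
  have hμ : 0 ≤ μ := div_nonneg (by linarith) hd.le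
  have hθμ : θ + μ = 1 := by rw [hθ_def, hμ_def]; field_simp; ring
  have hgp : g (θ • x₁ + μ • x) ≤ 0 :=
    calc _ ≤ θ * g x₁ + μ * g x := hg.2 hx₁ hx hθ hμ hθμ
      _ = 0 := by rw [hθ_def, hμ_def]; field_simp; ring
  have hVp : V ≤ θ * f x₁ + μ * f x :=
    (hV _ (hf.1 hx₁ hx hθ hμ hθμ) hgp).trans (hf.2 hx₁ hx hθ hμ hθμ)
  rw [hθ_def, hμ_def, div_mul_eq_mul_div, div_mul_eq_mul_div, ← add_div,
    le_div_iff₀ hd] at hVp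
  rw [div_le_div_iff₀ hgx (by linarith)]
  linarith

/-- The multiplier is the infimum of the slopes `(f x₁ - V) / (-g x₁)` over strictly feasible
`x₁`. -/
theorem exists_multiplier_of_convexOn_of_slater (hf : ConvexOn ℝ C f) (hg : ConvexOn ℝ C g)
    (hslater : ∃ x₀ ∈ C, g x₀ < 0) (hV : ∀ x ∈ C, g x ≤ 0 → V ≤ f x) :
    ∃ ν, 0 ≤ ν ∧ ∀ x ∈ C, V ≤ f x + ν * g x := by
  obtain ⟨x₀, hx₀, hgx₀⟩ := hslater
  set T := (fun x => (f x - V) / -g x) '' {x ∈ C | g x < 0}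
  have hT : T.Nonempty := ⟨_, Set.mem_image_of_mem _ ⟨hx₀, hgx₀⟩⟩
  have hT0 : ∀ r ∈ T, 0 ≤ r := by
    rintro _ ⟨x, ⟨hx, hgx⟩, rfl⟩
    exact div_nonneg (by linarith [hV x hx hgx.le]) (by linarith)
  refine ⟨sInf T, le_csInf hT hT0, fun x hx => ?_⟩
  rcases lt_trichotomy (g x) 0 with hgx | hgx | hgx
  · have := csInf_le ⟨0, hT0⟩ (Set.mem_image_of_mem _ ⟨hx, hgx⟩)
    rw [le_div_iff₀ (by linarith)] at this
    linarith
  · simpa [hgx] using hV x hx hgx.le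
  · have : (V - f x) / g x ≤ sInf T := le_csInf hT <| by
      rintro _ ⟨x₁, ⟨hx₁, hgx₁⟩, rfl⟩
      exact div_le_div_of_convexOn hf hg hV hx hx₁ hgx hgx₁
    rw [div_le_iff₀ hgx] at this
    linarith

end LagrangeMultiplier

def socpCone (l k : ℕ) : Set ((Fin l → ℝ) × (Fin l → ℝ) × (Fin k → ℝ)) :=
  {p | ∀ i, (1/2) * p.1 i ^ 2 ≤ p.2.1 i}

lemma convex_socpCone (l k : ℕ) : Convex ℝ (socpCone l k) := by
  intro p hp q hq a b ha hb hab i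
  simp only [Prod.fst_add, Prod.snd_add, Prod.smul_fst, Prod.smul_snd, Pi.add_apply,
    Pi.smul_apply, smul_eq_mul]
  obtain rfl : b = 1 - a := by linarith
  nlinarith [hp i, hq i, mul_nonneg ha hb, sq_nonneg (p.1 i - q.1 i)]

section SOCP

variable {l k : ℕ} (δ e α b : Fin l → ℝ) (ζ : Fin k → ℝ) (c c₀ : ℝ)

noncomputable def socpLagrangian (ν : ℝ) (x y : Fin l → ℝ) (z : Fin k → ℝ) : ℝ :=
  socpObj δ e ζ c₀ x y z + ν * (socpConLhs α b x y z + c)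

/-- The dual function `ρ(ν)`. -/
noncomputable def socpDual (ν : ℝ) : EReal :=
  ((c * ν + c₀ : ℝ) : EReal) + (∑ i, hDual (α i) (δ i) (b i) (e i) ν) + gDual ζ ν

lemma socpLagrangian_eq (ν : ℝ) (x y : Fin l → ℝ) (z : Fin k → ℝ) :
    socpLagrangian δ e α b ζ c c₀ ν x y z =
      (c * ν + c₀) + ∑ i, ((ν * α i + δ i) * y i + (ν * b i + e i) * x i)
        + ∑ j, (ζ j + ν) * z j := by
  simp only [socpLagrangian, socpObj, socpConLhs, add_mul, mul_add, Finset.sum_add_distrib,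
    Finset.mul_sum, mul_assoc]
  ring

lemma socpDual_le_socpLagrangian (ν : ℝ) {x y : Fin l → ℝ} (hxy : ∀ i, (1/2) * x i ^ 2 ≤ y i)
    (z : Fin k → ℝ) :
    socpDual δ e α b ζ c c₀ ν ≤ socpLagrangian δ e α b ζ c c₀ ν x y z := by
  rw [socpLagrangian_eq, EReal.coe_add, EReal.coe_add, EReal.coe_finset_sum]
  exact add_le_add (add_le_add le_rfl (Finset.sum_le_sum fun i _ => hDual_le _ _ _ _ _ (hxy i)))
    (gDual_le ζ ν z)

lemma le_socpDual_of_forall_le_socpLagrangian (ν : ℝ) {V : ℝ}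
    (H : ∀ (x y : Fin l → ℝ) (z : Fin k → ℝ), (∀ i, (1/2) * x i ^ 2 ≤ y i) →
      V ≤ socpLagrangian δ e α b ζ c c₀ ν x y z) :
    (V : EReal) ≤ socpDual δ e α b ζ c c₀ ν := by
  have hcoord : ∀ i (x y : ℝ), (1/2) * x ^ 2 ≤ y →
      V - (c * ν + c₀) ≤ (ν * α i + δ i) * y + (ν * b i + e i) * x := by
    intro i x y hxy
    have := H (Pi.single i x) (Pi.single i y) 0 fun i' => by
      rcases eq_or_ne i' i with rfl | hi
      · simpa using hxy
      · simp [hi]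
    rw [socpLagrangian_eq] at this
    simp only [Pi.single_apply, mul_ite, mul_zero, Finset.sum_add_distrib, Finset.sum_ite_eq',
      Finset.mem_univ, ↓reduceIte, Pi.zero_apply, Finset.sum_const_zero, add_zero] at this
    linarith
  choose x y hxy hx using fun i => exists_hDual_eq_of_forall_le _ _ _ _ ν (hcoord i)
  have hg : gDual ζ ν = 0 := by
    refine gDual_eq_zero_of_forall_le ζ ν (m := V - (c * ν + c₀)) fun z => ?_
    have := H 0 0 z fun i => by simp
    rw [socpLagrangian_eq] at this
    simp only [Pi.zero_apply, mul_zero, add_zero, Finset.sum_const_zero] at this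
    linarith
  calc (V : EReal) ≤ socpLagrangian δ e α b ζ c c₀ ν x y 0 := by exact_mod_cast H x y 0 hxy
    _ = socpDual δ e α b ζ c c₀ ν := by
      simp [socpLagrangian_eq, socpDual, hg, hx, EReal.coe_finset_sum]

lemma convexOn_socpObj {s : Set ((Fin l → ℝ) × (Fin l → ℝ) × (Fin k → ℝ))} (hs : Convex ℝ s) :
    ConvexOn ℝ s fun p => socpObj δ e ζ c₀ p.1 p.2.1 p.2.2 := by
  refine ⟨hs, fun p _ q _ θ μ _ _ hθμ => le_of_eq ?_⟩
  simp only [socpObj, Prod.fst_add, Prod.snd_add, Prod.smul_fst, Prod.smul_snd, Pi.add_apply,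
    Pi.smul_apply, smul_eq_mul, mul_add, Finset.sum_add_distrib, Finset.mul_sum, mul_left_comm]
  linear_combination (-c₀) * hθμ

lemma convexOn_socpConLhs {s : Set ((Fin l → ℝ) × (Fin l → ℝ) × (Fin k → ℝ))} (hs : Convex ℝ s) :
    ConvexOn ℝ s fun p => socpConLhs α b p.1 p.2.1 p.2.2 + c := by
  refine ⟨hs, fun p _ q _ θ μ _ _ hθμ => le_of_eq ?_⟩
  simp only [socpConLhs, Prod.fst_add, Prod.snd_add, Prod.smul_fst, Prod.smul_snd, Pi.add_apply,
    Pi.smul_apply, smul_eq_mul, mul_add, Finset.sum_add_distrib, Finset.mul_sum, mul_left_comm]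
  linear_combination (-c) * hθμ

theorem sSup_socpDual_le_socpVal :
    sSup {v | ∃ ν : ℝ, 0 ≤ ν ∧ v = socpDual δ e α b ζ c c₀ ν} ≤ socpVal δ e α b ζ c c₀ := by
  refine sSup_le ?_
  rintro _ ⟨ν, hν, rfl⟩
  refine le_sInf ?_
  rintro _ ⟨x, y, z, hcon, hxy, rfl⟩
  refine (socpDual_le_socpLagrangian δ e α b ζ c c₀ ν hxy z).trans ?_
  rw [EReal.coe_le_coe_iff, socpLagrangian]
  nlinarith [mul_nonpos_of_nonneg_of_nonpos hν hcon]

theorem socpVal_le_sSup_socpDual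
    (hslater : ∃ (x : Fin l → ℝ) (z : Fin k → ℝ),
      (∑ i, ((1/2) * α i * x i ^ 2 + b i * x i)) + (∑ j, z j) + c < 0) :
    socpVal δ e α b ζ c c₀ ≤ sSup {v | ∃ ν : ℝ, 0 ≤ ν ∧ v = socpDual δ e α b ζ c c₀ ν} := by
  obtain ⟨x₀, z₀, h₀⟩ := hslater
  have hp₀ : socpConLhs α b x₀ (fun i => (1/2) * x₀ i ^ 2) z₀ + c < 0 := by
    rw [socpConLhs]
    convert h₀ using 5 with i
    ring
  have hle : ∀ (x y : Fin l → ℝ) (z : Fin k → ℝ), socpConLhs α b x y z + c ≤ 0 →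
      (∀ i, (1/2) * x i ^ 2 ≤ y i) → socpVal δ e α b ζ c c₀ ≤ socpObj δ e ζ c₀ x y z :=
    fun x y z hcon hxy => sInf_le ⟨x, y, z, hcon, hxy, rfl⟩
  induction hV : socpVal δ e α b ζ c c₀ using EReal.rec with
  | bot => exact bot_le
  | top => simpa [hV] using hle _ _ _ hp₀.le fun i => le_rfl
  | coe V =>
    obtain ⟨ν, hν, hlag⟩ := exists_multiplier_of_convexOn_of_slater
      (convexOn_socpObj δ e ζ c₀ (convex_socpCone l k))
      (convexOn_socpConLhs α b c (convex_socpCone l k))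
      ⟨(x₀, _, z₀), fun i => le_rfl, hp₀⟩
      (V := V) fun p hp hcon => by exact_mod_cast hV ▸ hle _ _ _ hcon hp
    exact (le_socpDual_of_forall_le_socpLagrangian δ e α b ζ c c₀ ν
      fun x y z hxy => hlag (x, y, z) hxy).trans (le_sSup ⟨ν, hν, rfl⟩)

end SOCP

theorem stmt_11 (l k : ℕ) (δ e α b : Fin l → ℝ) (ζ : Fin k → ℝ) (c c₀ : ℝ)
    (hslater : ∃ (x : Fin l → ℝ) (z : Fin k → ℝ),
      (∑ i, ((1/2) * α i * x i ^ 2 + b i * x i)) + (∑ j, z j) + c < 0) :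
    socpVal δ e α b ζ c c₀ =
      sSup {v : EReal | ∃ ν : ℝ, 0 ≤ ν ∧
        v = ((c * ν + c₀ : ℝ) : EReal) +
          (∑ i, hDual (α i) (δ i) (b i) (e i) ν) + gDual ζ ν} :=
  (socpVal_le_sSup_socpDual δ e α b ζ c c₀ hslater).antisymm
    (sSup_socpDual_le_socpVal δ e α b ζ c c₀)
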